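/- Let F be a strategyproof 2-facility mechanism on the line with approximation ratio at most ρ, and let x be an (i|j,k)-well-separated 3-agent instance with F_2(x) = x_k. Then for every x'_k with x_j < x'_k < x_k, the instance x' obtained by replacing x_k with x'_k satisfies F_2(x') = x'_k. -/

import Mathlib

noncomputable section

/-- Cost of an agent at location `a` under a pair of facilities. -/
def fcost (a : ℝ) (y : ℝ × ℝ) : ℝ := min |a - y.1| |a - y.2|

/-- Social cost: sum of the agents' distances to their nearest facility. -/
def scost {n : ℕ} (x : Fin n → ℝ) (y : ℝ × ℝ) : ℝ := ∑ i, fcost (x i) y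

/-- Optimal social cost over all placements of two facilities. -/
def optCost {n : ℕ} (x : Fin n → ℝ) : ℝ := ⨅ y : ℝ × ℝ, scost x y

/-- The mechanism outputs its facilities in increasing order. -/
def Ordered {n : ℕ} (F : (Fin n → ℝ) → ℝ × ℝ) : Prop := ∀ x, (F x).1 ≤ (F x).2

/-- No agent can strictly decrease her cost by misreporting her location. -/
def Strategyproof {n : ℕ} (F : (Fin n → ℝ) → ℝ × ℝ) : Prop :=
  ∀ (x : Fin n → ℝ) (i : Fin n) (y : ℝ),
    fcost (x i) (F x) ≤ fcost (x i) (F (Function.update x i y))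

/-- `F` has approximation ratio (at most) `ρ` for the social cost. -/
def ApproxRatio {n : ℕ} (F : (Fin n → ℝ) → ℝ × ℝ) (ρ : ℝ) : Prop :=
  ∀ x, scost x (F x) ≤ ρ * optCost x

/-- An `(i|j,k)`-well-separated 3-agent instance. -/
def WellSep (ρ : ℝ) (x : Fin 3 → ℝ) (i j k : Fin 3) : Prop :=
  x i < x j ∧ x j < x k ∧ ρ * (x k - x j) < x j - x i


/-
For `x_j < s ≤ x_k` the instance `x^s = x[k ↦ s]` is still well separated, so
`p s := F₂(x^s) ≤ s` and agent `k`'s cost at `x^s` is `s - p s`; strategyproofness bounds it by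
the distance from `s` to every value of `p`. If `p a = a - c` with `c > 0`, no value of `p`
lies in `(a - c, a + c)`, yet `p x_k = x_k`. Let `B` be the infimum of the values of `p` above
`a - c`: an agent just below `B` is served at or below `a - c`, although some report would
get her a facility close to `B`.
-/

open Function Set

lemma fcost_nonneg (a : ℝ) (y : ℝ × ℝ) : 0 ≤ fcost a y :=
  le_min (abs_nonneg _) (abs_nonneg _)

@[simp]
lemma fcost_self_fst (a q : ℝ) : fcost a (a, q) = 0 := by
  simp [fcost]

@[simp]
lemma fcost_self_snd (p a : ℝ) : fcost a (p, a) = 0 := by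
  simp [fcost]

lemma fcost_le_abs_sub_add (a b : ℝ) (y : ℝ × ℝ) : fcost a y ≤ |a - b| + fcost b y := by
  rw [fcost, fcost, ← min_add_add_left]
  exact min_le_min (abs_sub_le a b y.1) (abs_sub_le a b y.2)

lemma sub_snd_le_fcost {a : ℝ} {y : ℝ × ℝ} (hy : y.1 ≤ y.2) : a - y.2 ≤ fcost a y :=
  le_min ((sub_le_sub_left hy a).trans (le_abs_self _)) (le_abs_self _)

lemma fcost_le_scost {n : ℕ} (x : Fin n → ℝ) (y : ℝ × ℝ) (m : Fin n) :
    fcost (x m) y ≤ scost x y :=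
  Finset.single_le_sum (fun _ _ => fcost_nonneg _ _) (Finset.mem_univ m)

lemma scost_nonneg {n : ℕ} (x : Fin n → ℝ) (y : ℝ × ℝ) : 0 ≤ scost x y :=
  Finset.sum_nonneg fun _ _ => fcost_nonneg _ _

lemma optCost_nonneg {n : ℕ} (x : Fin n → ℝ) : 0 ≤ optCost x :=
  le_ciInf (scost_nonneg x)

lemma optCost_le_scost {n : ℕ} (x : Fin n → ℝ) (y : ℝ × ℝ) : optCost x ≤ scost x y :=
  ciInf_le ⟨0, by rintro _ ⟨y', rfl⟩; exact scost_nonneg x y'⟩ y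

lemma scost_eq_of_ne (x : Fin 3 → ℝ) (y : ℝ × ℝ) {i j k : Fin 3}
    (hij : i ≠ j) (hik : i ≠ k) (hjk : j ≠ k) :
    scost x y = fcost (x i) y + fcost (x j) y + fcost (x k) y := by
  rw [scost]
  fin_cases i <;> fin_cases j <;> fin_cases k <;> simp_all [Fin.sum_univ_three] <;> ring

/-- Bounded approximation forces a facility at every agent of a zero-cost instance, so an
agent can secure one at any location `b` where reporting `b` creates such an instance. -/
lemma fcost_le_of_scost_update_eq_zero {n : ℕ} {F : (Fin n → ℝ) → ℝ × ℝ} {ρ : ℝ}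
    (hsp : Strategyproof F) (happ : ApproxRatio F ρ) (x : Fin n → ℝ) (m : Fin n) {b : ℝ}
    {y : ℝ × ℝ} (hy : scost (update x m b) y = 0) :
    fcost (x m) (F x) ≤ |x m - b| := by
  set w := update x m b
  have hopt : optCost w = 0 := le_antisymm (hy ▸ optCost_le_scost w y) (optCost_nonneg w)
  have hb : fcost b (F w) ≤ 0 := by
    simpa [w, hopt] using (fcost_le_scost w (F w) m).trans (happ w)
  calc fcost (x m) (F x) ≤ fcost (x m) (F w) := hsp x m b
    _ ≤ |x m - b| + fcost b (F w) := fcost_le_abs_sub_add _ _ _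
    _ ≤ |x m - b| := by linarith

lemma WellSep.update_of_le {ρ : ℝ} {x : Fin 3 → ℝ} {i j k : Fin 3} (hws : WellSep ρ x i j k)
    (hρ : 0 ≤ ρ) (hik : i ≠ k) (hjk : j ≠ k) {s : ℝ} (hjs : x j < s) (hsk : s ≤ x k) :
    WellSep ρ (update x k s) i j k := by
  obtain ⟨hij, -, hsep⟩ := hws
  simp only [WellSep, update_of_ne hik, update_of_ne hjk, update_self]
  exact ⟨hij, hjs, lt_of_le_of_lt (by gcongr) hsep⟩

/-- If `F₂ > y_k`, agent `j` could report `y_k` and be served within `y_k - y_j`, so `F₁` must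
serve her; then agents `i` and `j` together pay at least `y_j - y_i > ρ · opt`. -/
lemma WellSep.snd_le {F : (Fin 3 → ℝ) → ℝ × ℝ} {ρ : ℝ} (hρ : 0 ≤ ρ)
    (hsp : Strategyproof F) (happ : ApproxRatio F ρ) {y : Fin 3 → ℝ} {i j k : Fin 3}
    (hij : i ≠ j) (hik : i ≠ k) (hjk : j ≠ k) (hws : WellSep ρ y i j k) :
    (F y).2 ≤ y k := by
  obtain ⟨hyij, hyjk, hsep⟩ := hws
  by_contra! hF
  have hj : fcost (y j) (F y) ≤ y k - y j := by
    have hzero : scost (update y j (y k)) (y i, y k) = 0 := by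
      simp [scost_eq_of_ne _ _ hij hik hjk, update_of_ne hij, update_of_ne hjk.symm]
    have := fcost_le_of_scost_update_eq_zero hsp happ y j hzero
    rwa [abs_of_nonpos (by linarith), neg_sub] at this
  have hopt : optCost y ≤ y k - y j := by
    refine (optCost_le_scost y (y i, y j)).trans ?_
    rw [scost_eq_of_ne _ _ hij hik hjk]
    simp only [fcost_self_fst, fcost_self_snd, zero_add]
    exact (min_le_right _ _).trans_eq (abs_of_pos (sub_pos.2 hyjk))
  have hij_cost : y j - y i ≤ fcost (y i) (F y) + fcost (y j) (F y) := by
    have hj2 : y k - y j < |y j - (F y).2| := by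
      linarith [le_abs_self ((F y).2 - y j), abs_sub_comm (y j) (F y).2]
    have hj1 : fcost (y j) (F y) = |y j - (F y).1| :=
      min_eq_left (((min_le_iff.mp hj).resolve_right hj2.not_ge).trans hj2.le)
    rw [hj1, fcost]
    rcases min_cases |y i - (F y).1| |y i - (F y).2| with ⟨h, -⟩ | ⟨h, -⟩ <;> rw [h]
    · linarith [abs_sub_le (y i) (F y).1 (y j), abs_sub_comm (y j) (F y).1,
        neg_abs_le (y i - y j)]
    · linarith [neg_abs_le (y i - (F y).2), abs_nonneg (y j - (F y).1)]
  have hcost := scost_eq_of_ne y (F y) hij hik hjk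
  linarith [happ y, fcost_nonneg (y k) (F y), mul_le_mul_of_nonneg_left hopt hρ]

/-- One-dimensional core of the argument: `p s` is the facility an agent reporting `s` is
served by, always at or to the left of `s`, and no report beats the truthful one. -/
lemma eq_self_of_sub_le_abs_sub {p : ℝ → ℝ} {a b : ℝ} (hab : a ≤ b)
    (hle : ∀ s ∈ Icc a b, p s ≤ s)
    (hsp : ∀ s ∈ Icc a b, ∀ s' ∈ Icc a b, s - p s ≤ |s - p s'|) (hb : p b = b) :
    p a = a := by
  by_contra hne
  have hpa : p a < a := lt_of_le_of_ne (hle a ⟨le_rfl, hab⟩) hne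
  set S : Set ℝ := {q | ∃ s ∈ Icc a b, p s = q ∧ p a < q}
  have hbS : b ∈ S := ⟨b, ⟨hab, le_rfl⟩, hb, by linarith⟩
  have hgap : ∀ q ∈ S, 2 * a - p a ≤ q := by
    rintro q ⟨s, hs, rfl, hq⟩
    have := hsp a ⟨le_rfl, hab⟩ s hs
    rcases le_abs'.mp this with h | h <;> linarith
  have hbdd : BddBelow S := ⟨_, hgap⟩
  set B := sInf S
  have hB : 2 * a - p a ≤ B := le_csInf ⟨b, hbS⟩ hgap
  have hBb : B ≤ b := csInf_le hbdd hbS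
  obtain ⟨δ, hδ⟩ : ∃ δ, B - a = 3 * δ := ⟨(B - a) / 3, by ring⟩
  obtain ⟨_, ⟨s, hs, rfl, hsS⟩, hsB⟩ : ∃ q ∈ S, q < B + δ :=
    (csInf_lt_iff hbdd ⟨b, hbS⟩).mp (by linarith)
  have ht : B - δ ∈ Icc a b := ⟨by linarith, by linarith⟩
  have hpt : p (B - δ) ≤ p a := by
    by_contra! h
    linarith [csInf_le hbdd ⟨B - δ, ht, rfl, h⟩, hle _ ht]
  have hBs : B ≤ p s := csInf_le hbdd ⟨s, hs, rfl, hsS⟩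
  have := hsp _ ht s hs
  rw [abs_sub_comm, abs_of_nonneg (by linarith)] at this
  linarith

/-- Proposition `c_pushes_b`: if `x` is `(i|j,k)`-well-separated and the
rightmost facility is at `x_k`, then moving agent `k` to any `x'_k` with
`x_j < x'_k < x_k` keeps the rightmost facility at agent `k`'s location. -/
theorem c_pushes_b (F : (Fin 3 → ℝ) → ℝ × ℝ) (ρ : ℝ) (hρ : 1 ≤ ρ)
    (hord : Ordered F) (hsp : Strategyproof F) (happ : ApproxRatio F ρ)
    (x : Fin 3 → ℝ) (i j k : Fin 3)
    (hij : i ≠ j) (hik : i ≠ k) (hjk : j ≠ k)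
    (hws : WellSep ρ x i j k) (hF : (F x).2 = x k)
    (x'k : ℝ) (h1 : x j < x'k) (h2 : x'k < x k) :
    (F (Function.update x k x'k)).2 = x'k := by
  have hρ0 : 0 ≤ ρ := by linarith
  have hle : ∀ s ∈ Icc x'k (x k), (F (update x k s)).2 ≤ s := fun s hs => by
    simpa using (hws.update_of_le hρ0 hik hjk (h1.trans_le hs.1) hs.2).snd_le hρ0 hsp happ
      hij hik hjk
  refine eq_self_of_sub_le_abs_sub h2.le hle (fun s _ s' _ => ?_) (by simp [hF])
  calc s - (F (update x k s)).2 ≤ fcost s (F (update x k s)) := sub_snd_le_fcost (hord _)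
    _ ≤ fcost s (F (update x k s')) := by simpa using hsp (update x k s) k s'
    _ ≤ |s - (F (update x k s')).2| := min_le_right _ _
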